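/- Let k ≥ 4 be an integer. The finite binary word x = 1(0^{k-1}1)^{k-2} 0^{k-2} 1 0^{k-2} (10^{k-1})^{k-2} 1, which has length 2k² - 2k - 1, contains no factor that is a k-power and no factor that is a k-anti-power. Consequently, N_α(k,k) ≥ 2k² - 2k for every alphabet size α ≥ 2, where N_α(k,k) is the least N such that every word of length N over an alphabet of size α contains a k-power or a k-anti-power. -/

import Mathlib

/-
Write `c = k * (k - 1) - 1` for the centre of the palindrome `x = lowerBoundWord k`. Its `1`s sit
at the multiples of `k` below `c`, at `c`, and at the positions `≡ -2 (mod k)` above `c`.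

Since `x` has no `k` consecutive `0`s, a `k`-power `u^k` with `|u| = g` yields `k` ones in
arithmetic progression with difference `g`. If `k ∣ g`, the first and last are congruent mod `k`
but too far apart to lie on the same side of `c`; if `k ∤ g`, two ones on the same side cannot be
consecutive terms, so every step crosses the centre, which is impossible for three steps.

For a `k`-anti-power with blocks of length `m` (necessarily `m ≤ 2k - 3`) two blocks coincide:
for `m ≤ k - 2` each block holds at most one `1` and there are only `m + 1` such blocks; for
`m = k - 1` the word has period `k - 1` around the centre; if `gcd m k ≥ 3` some `d ≤ k / 3`
has `k ∣ d m`, and blocks `d` apart on one side of `c` agree; otherwise some `d` has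
`k ∣ d m + 2`, and a block left of `c` agrees with the one `d` blocks further, right of `c`.

`N_α(k,k)` is finite: if a word of length `k^5 + k^3` has no `k`-anti-power, then for each of the
`k^2 + 1` lengths `m ∈ [k^4, k^4 + k^2]` two blocks `i < j` of its prefix of length `k m` agree,
two lengths share the pair `(i, j)`, and the two coincidences make a factor periodic enough to be a
`k`-power.
-/

/-- The `i`-th block of length `m` of a finite word `v`. -/
def listBlock {A : Type*} (v : List A) (m i : ℕ) : List A :=
  (v.drop (i * m)).take m

/-- `w` contains a factor that is a `k`-power `u^k` for some nonempty `u`. -/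
def HasKPowerFactor {A : Type*} (k : ℕ) (w : List A) : Prop :=
  ∃ u : List A, u ≠ [] ∧ (List.replicate k u).flatten <:+: w

/-- `v` is a `k`-anti-power: `v` consists of `k` pairwise distinct blocks of equal
positive length. -/
def IsKAntipower {A : Type*} (k : ℕ) (v : List A) : Prop :=
  ∃ m : ℕ, 1 ≤ m ∧ v.length = k * m ∧
    ∀ i < k, ∀ j < k, i ≠ j → listBlock v m i ≠ listBlock v m j

/-- `w` contains a factor that is a `k`-anti-power. -/
def HasKAntipowerFactor {A : Type*} (k : ℕ) (w : List A) : Prop :=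
  ∃ v : List A, v <:+: w ∧ IsKAntipower k v

/-- `N_α(k,k)` : the least `N` such that every word of length `N` over an alphabet of
size `α` contains a `k`-power or a `k`-anti-power. -/
noncomputable def Nalpha (α k : ℕ) : ℕ :=
  sInf {N | ∀ w : List (Fin α), w.length = N →
    HasKPowerFactor k w ∨ HasKAntipowerFactor k w}

/-- The binary word `x = 1 (0^(k-1) 1)^(k-2) 0^(k-2) 1 0^(k-2) (1 0^(k-1))^(k-2) 1`. -/
def lowerBoundWord (k : ℕ) : List (Fin 2) :=
  [1] ++ (List.replicate (k - 2) (List.replicate (k - 1) (0 : Fin 2) ++ [1])).flatten ++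
    List.replicate (k - 2) 0 ++ [1] ++ List.replicate (k - 2) 0 ++
    (List.replicate (k - 2) ((1 : Fin 2) :: List.replicate (k - 1) 0)).flatten ++ [1]

open List

section Lists

variable {α : Type*}

theorem getElem?_flatten_replicate (n : ℕ) (u : List α) {p : ℕ} (hp : p < n * u.length) :
    (replicate n u).flatten[p]? = u[p % u.length]? := by
  induction n generalizing p with
  | zero => simp at hp
  | succ n ih =>
    rw [replicate_succ, flatten_cons]
    rcases lt_or_ge p u.length with hpu | hpu
    · rw [getElem?_append_left hpu, Nat.mod_eq_of_lt hpu]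
    · rw [getElem?_append_right hpu, ih (by rw [Nat.add_one_mul] at hp; omega),
        Nat.mod_eq_sub_mod hpu]

theorem cons_flatten_replicate (a : α) (b : List α) (n : ℕ) :
    a :: (replicate n (b ++ [a])).flatten = (replicate n (a :: b)).flatten ++ [a] := by
  induction n with
  | zero => rfl
  | succ n ih => simp [replicate_succ, ← ih]

theorem getElem?_cons_replicate (a b : α) {n r : ℕ} (hr : r ≤ n) :
    (a :: replicate n b)[r]? = some (if r = 0 then a else b) := by
  rcases r with _ | r
  · rfl
  · simp [getElem?_replicate_of_lt (show r < n by omega)]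

theorem getElem?_add_mod_of_periodic {w : List α} {s n p : ℕ}
    (hper : ∀ t, t + p < n → w[s + t]? = w[s + t + p]?) {i : ℕ} (hi : i < n) :
    w[s + i]? = w[s + i % p]? := by
  rcases Nat.eq_zero_or_pos p with rfl | hp
  · simp
  induction i using Nat.strong_induction_on with
  | _ i ih =>
    rcases lt_or_ge i p with hip | hip
    · rw [Nat.mod_eq_of_lt hip]
    · rw [Nat.mod_eq_sub_mod hip, ← ih (i - p) (by omega) (by omega),
        hper (i - p) (by omega), Nat.add_assoc, Nat.sub_add_cancel hip]

theorem getElem?_listBlock (v : List α) (m i t : ℕ) :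
    (listBlock v m i)[t]? = if t < m then v[i * m + t]? else none := by
  simp [listBlock, getElem?_take]

theorem listBlock_eq_listBlock_iff {v : List α} {m i j : ℕ} :
    listBlock v m i = listBlock v m j ↔ ∀ t < m, v[i * m + t]? = v[j * m + t]? := by
  refine ⟨fun h t ht => ?_, fun h => ext_getElem? fun t => ?_⟩
  · simpa [getElem?_listBlock, ht] using congrArg (·[t]?) h
  · simp only [getElem?_listBlock]
    split_ifs with ht
    exacts [h t ht, rfl]

end Lists

section Factors

variable {α β : Type*}

theorem hasKPowerFactor_iff {k : ℕ} (hk : 0 < k) {w : List α} :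
    HasKPowerFactor k w ↔ ∃ s p, 0 < p ∧ s + k * p ≤ w.length ∧
      ∀ t, t + p < k * p → w[s + t]? = w[s + t + p]? := by
  constructor
  · rintro ⟨u, hu, hinf⟩
    obtain ⟨s, hs, hget⟩ := infix_iff_getElem?.mp hinf
    have hlen : (replicate k u).flatten.length = k * u.length := by simp
    have hw : ∀ i < k * u.length, w[s + i]? = u[i % u.length]? := fun i hi => by
      rw [Nat.add_comm, hget i (by omega), ← getElem?_eq_getElem,
        getElem?_flatten_replicate k u hi]
    refine ⟨s, u.length, length_pos_iff.mpr hu, by omega, fun t ht => ?_⟩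
    rw [hw t (by omega), Nat.add_assoc, hw (t + u.length) ht, Nat.add_mod_right]
  · rintro ⟨s, p, hp, hw, hper⟩
    set u := (w.drop s).take p
    have hu : u.length = p := by
      simp only [u, length_take, length_drop]
      have : p ≤ k * p := Nat.le_mul_of_pos_left p hk
      omega
    refine ⟨u, ne_nil_of_length_pos (by omega),
      infix_iff_getElem?.mpr ⟨s, ?_, fun i hi => ?_⟩⟩
    · simpa [hu, Nat.add_comm] using hw
    · have hi' : i < k * u.length := by simpa using hi
      rw [← getElem?_eq_getElem, getElem?_flatten_replicate k u hi', Nat.add_comm,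
        getElem?_add_mod_of_periodic hper (by rwa [hu] at hi'), hu]
      simp [u, Nat.mod_lt i hp]

theorem hasKAntipowerFactor_iff {k : ℕ} {w : List α} :
    HasKAntipowerFactor k w ↔ ∃ s m, 0 < m ∧ s + k * m ≤ w.length ∧
      ∀ i < k, ∀ j < k, (∀ t < m, w[s + i * m + t]? = w[s + j * m + t]?) → i = j := by
  have block_index {i t m : ℕ} (hi : i < k) (ht : t < m) : i * m + t < k * m := by nlinarith
  constructor
  · rintro ⟨v, hinf, m, hm, hlen, hdist⟩
    obtain ⟨s, hs, hget⟩ := infix_iff_getElem?.mp hinf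
    have hv : ∀ n < k * m, v[n]? = w[s + n]? := fun n hn => by
      rw [Nat.add_comm, hget n (by omega), getElem?_eq_getElem]
    refine ⟨s, m, hm, by omega, fun i hi j hj hij =>
      by_contra fun hne => hdist i hi j hj hne ?_⟩
    refine listBlock_eq_listBlock_iff.mpr fun t ht => ?_
    rw [hv _ (block_index hi ht), hv _ (block_index hj ht), ← Nat.add_assoc, ← Nat.add_assoc]
    exact hij t ht
  · rintro ⟨s, m, hm, hw, hdist⟩
    set v := (w.drop s).take (k * m)
    have hv : ∀ n < k * m, v[n]? = w[s + n]? := fun n hn => by simp [v, hn]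
    refine ⟨v, (take_prefix _ _).isInfix.trans (drop_suffix _ _).isInfix, m, hm,
      by simp [v]; omega, fun i hi j hj hne heq => hne (hdist i hi j hj fun t ht => ?_)⟩
    rw [Nat.add_assoc, Nat.add_assoc, ← hv _ (block_index hi ht), ← hv _ (block_index hj ht)]
    exact listBlock_eq_listBlock_iff.mp heq t ht

theorem HasKPowerFactor.mono {k : ℕ} {v w : List α} (h : HasKPowerFactor k v) (hvw : v <:+: w) :
    HasKPowerFactor k w :=
  let ⟨u, hu, huv⟩ := h
  ⟨u, hu, huv.trans hvw⟩

theorem HasKAntipowerFactor.mono {k : ℕ} {v w : List α} (h : HasKAntipowerFactor k v)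
    (hvw : v <:+: w) : HasKAntipowerFactor k w :=
  let ⟨u, huv, hu⟩ := h
  ⟨u, huv.trans hvw, hu⟩

theorem HasKPowerFactor.of_map {k : ℕ} (hk : 0 < k) {f : α → β} (hf : Function.Injective f)
    {w : List α} (h : HasKPowerFactor k (w.map f)) : HasKPowerFactor k w := by
  obtain ⟨s, p, hp, hw, hper⟩ := (hasKPowerFactor_iff hk).mp h
  refine (hasKPowerFactor_iff hk).mpr ⟨s, p, hp, by simpa using hw, fun t ht => ?_⟩
  simpa [(Option.map_injective hf).eq_iff] using hper t ht

theorem HasKAntipowerFactor.of_map {k : ℕ} {f : α → β} {w : List α}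
    (h : HasKAntipowerFactor k (w.map f)) : HasKAntipowerFactor k w := by
  obtain ⟨s, m, hm, hw, hdist⟩ := hasKAntipowerFactor_iff.mp h
  refine hasKAntipowerFactor_iff.mpr ⟨s, m, hm, by simpa using hw, fun i hi j hj hij => ?_⟩
  exact hdist i hi j hj fun t ht => by simp [hij t ht]

end Factors

section Finiteness

variable {α : Type*}

theorem exists_blocks_eq_of_not_hasKAntipowerFactor {k m : ℕ} {w : List α}
    (h : ¬ HasKAntipowerFactor k w) (hm : 0 < m) (hw : k * m ≤ w.length) :
    ∃ i j, i < j ∧ j < k ∧ ∀ t < m, w[i * m + t]? = w[j * m + t]? := by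
  rw [hasKAntipowerFactor_iff] at h
  push Not at h
  obtain ⟨i, hi, j, hj, hij, hne⟩ := h 0 m hm (by simpa using hw)
  simp only [Nat.zero_add] at hij
  rcases lt_or_gt_of_ne hne with hlt | hlt
  exacts [⟨i, j, hlt, hj, hij⟩, ⟨j, i, hlt, hi, fun t ht => (hij t ht).symm⟩]

/-- Equal blocks `i < j` for two block lengths `m₁ < m₂` force the period
`(j - i) * (m₂ - m₁)` on a long enough factor. -/
theorem hasKPowerFactor_of_blocks_eq {k i j m₁ m₂ : ℕ} {w : List α} (hij : i < j)
    (hjk : j < k) (hm : m₁ < m₂) (hgap : k ^ 2 * (m₂ - m₁) ≤ m₁)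
    (hw : k * m₂ ≤ w.length)
    (h₁ : ∀ t < m₁, w[i * m₁ + t]? = w[j * m₁ + t]?)
    (h₂ : ∀ t < m₂, w[i * m₂ + t]? = w[j * m₂ + t]?) : HasKPowerFactor k w := by
  obtain ⟨d, rfl⟩ := Nat.exists_eq_add_of_le hij.le
  obtain ⟨δ, rfl⟩ := Nat.exists_eq_add_of_le hm.le
  obtain ⟨k, rfl⟩ : ∃ k', k = k' + 1 := ⟨k - 1, by omega⟩
  simp only [Nat.add_sub_cancel_left] at hgap
  have hd : 0 < d := by omega
  have hδ : 0 < δ := by omega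
  have hfit : i * δ + k * (d * δ) ≤ m₁ := by
    have : i + k * d ≤ (k + 1) ^ 2 := by nlinarith
    nlinarith
  refine (hasKPowerFactor_iff (by omega)).mpr
    ⟨i * (m₁ + δ) + d * m₁, d * δ, Nat.mul_pos hd hδ, ?_, fun t ht => ?_⟩
  · have : (i + d + 1) * m₁ ≤ (k + 1) * m₁ := Nat.mul_le_mul_right _ (by omega)
    have : d * δ ≤ (k + 1) * δ := Nat.mul_le_mul_right _ (by omega)
    nlinarith
  · have e₁ := h₁ (i * δ + t) (by nlinarith)
    have e₂ := h₂ t (by nlinarith)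
    rw [show i * m₁ + (i * δ + t) = i * (m₁ + δ) + t by ring,
      show (i + d) * m₁ + (i * δ + t) = i * (m₁ + δ) + d * m₁ + t by ring] at e₁
    rw [show (i + d) * (m₁ + δ) + t = i * (m₁ + δ) + d * m₁ + t + d * δ by ring] at e₂
    exact e₁.symm.trans e₂

theorem hasKPowerFactor_or_hasKAntipowerFactor {k : ℕ} (hk : 0 < k) {w : List α}
    (hw : k ^ 5 + k ^ 3 ≤ w.length) : HasKPowerFactor k w ∨ HasKAntipowerFactor k w := by
  refine or_iff_not_imp_right.mpr fun hanti => ?_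
  have hblocks : ∀ m ∈ Finset.Icc (k ^ 4) (k ^ 4 + k ^ 2), ∃ ij : ℕ × ℕ,
      ij.1 < ij.2 ∧ ij.2 < k ∧ ∀ t < m, w[ij.1 * m + t]? = w[ij.2 * m + t]? := by
    intro m hm
    rw [Finset.mem_Icc] at hm
    have : k * m ≤ k * (k ^ 4 + k ^ 2) := Nat.mul_le_mul_left k hm.2
    obtain ⟨i, j, h⟩ := exists_blocks_eq_of_not_hasKAntipowerFactor hanti (m := m)
      (lt_of_lt_of_le (by positivity) hm.1) (by nlinarith)
    exact ⟨(i, j), h⟩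
  choose! pair hpair using hblocks
  obtain ⟨m₁, hm₁, m₂, hm₂, hne, heq⟩ := Finset.exists_ne_map_eq_of_card_lt_of_maps_to
    (s := Finset.Icc (k ^ 4) (k ^ 4 + k ^ 2)) (t := Finset.range k ×ˢ Finset.range k)
    (by simp [sq]; omega) (f := pair) (fun m hm => by have := hpair m hm; simp; omega)
  wlog hlt : m₁ < m₂ generalizing m₁ m₂
  · exact this m₂ hm₂ m₁ hm₁ hne.symm heq.symm (by omega)
  obtain ⟨hij, hjk, h₁⟩ := hpair m₁ hm₁
  obtain ⟨-, -, h₂⟩ := hpair m₂ hm₂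
  rw [← heq] at h₂
  rw [Finset.mem_Icc] at hm₁ hm₂
  refine hasKPowerFactor_of_blocks_eq hij hjk hlt ?_ ?_ h₁ h₂
  · calc k ^ 2 * (m₂ - m₁) ≤ k ^ 2 * k ^ 2 := Nat.mul_le_mul_left _ (by omega)
      _ = k ^ 4 := by ring
      _ ≤ m₁ := hm₁.1
  · calc k * m₂ ≤ k * (k ^ 4 + k ^ 2) := Nat.mul_le_mul_left k hm₂.2
      _ = k ^ 5 + k ^ 3 := by ring
      _ ≤ w.length := hw

theorem length_lt_nalpha {α k : ℕ} (hk : 0 < k) {x : List (Fin α)}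
    (hpow : ¬ HasKPowerFactor k x) (hanti : ¬ HasKAntipowerFactor k x) :
    x.length < Nalpha α k := by
  refine Nat.lt_of_succ_le (le_csInf ⟨k ^ 5 + k ^ 3, fun w hw =>
    hasKPowerFactor_or_hasKAntipowerFactor hk hw.ge⟩ fun N hN => ?_)
  by_contra! hN'
  have hpre : x.take N <:+: x := (take_prefix N x).isInfix
  rcases hN (x.take N) (by simp; omega) with h | h
  exacts [hpow (h.mono hpre), hanti (h.mono hpre)]

end Finiteness

section Arithmetic

theorem add_le_of_dvd_of_lt {k a b : ℕ} (ha : k ∣ a) (hb : k ∣ b) (hab : a < b) :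
    a + k ≤ b := by
  have := Nat.le_of_dvd (by omega) (Nat.dvd_sub hb ha)
  omega

theorem exists_dvd_mem_Ico {k : ℕ} (hk : 0 < k) (s : ℕ) :
    ∃ n, s ≤ n ∧ n < s + k ∧ k ∣ n := by
  refine ⟨s + (k - s % k) % k, by omega, ?_, ?_⟩
  · have := Nat.mod_lt (k - s % k) hk
    omega
  · rw [Nat.dvd_iff_mod_eq_zero, Nat.add_mod, Nat.mod_mod]
    rcases Nat.eq_zero_or_pos (s % k) with h | h
    · simp [h]
    · rw [Nat.mod_eq_of_lt (show k - s % k < k by omega), show s % k + (k - s % k) = k by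
        have := Nat.mod_lt s hk; omega, Nat.mod_self]

theorem exists_dvd_mul_add_two {k m : ℕ} (hk : 2 < k) (hg : Nat.gcd m k ∣ 2) :
    ∃ d < k, k ∣ d * m + 2 := by
  obtain ⟨m', -, hm'⟩ := Nat.exists_mul_mod_eq_gcd (k := k) (n := m)
    (lt_of_le_of_lt (Nat.le_of_dvd two_pos hg) hk)
  obtain ⟨e, he⟩ := hg
  -- `m * m' ≡ gcd m k` and `gcd m k * e = 2`, so `d ≡ -m' * e` works
  refine ⟨m' * e * (k - 1) % k, Nat.mod_lt _ (by omega), ?_⟩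
  rw [← ZMod.natCast_eq_zero_iff]
  have h₁ : ((m * m' : ℕ) : ZMod k) = (Nat.gcd m k : ℕ) := by rw [← hm', ZMod.natCast_mod]
  have h₂ : ((2 : ℕ) : ZMod k) = (Nat.gcd m k * e : ℕ) := by rw [← he]
  have h₃ : ((k - 1 : ℕ) : ZMod k) = -1 := by
    rw [Nat.cast_sub (by omega), ZMod.natCast_self]; ring
  push_cast [ZMod.natCast_mod] at h₁ h₂ h₃ ⊢
  rw [h₃]
  linear_combination (-(e : ZMod k)) * h₁ + h₂

theorem exists_least_le_add_mul {A s m n₀ : ℕ} (h : A ≤ s + n₀ * m) :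
    ∃ n ≤ n₀, A ≤ s + n * m ∧ ∀ i < n, s + i * m < A := by
  have hex : ∃ n, A ≤ s + n * m := ⟨n₀, h⟩
  exact ⟨Nat.find hex, Nat.find_min' hex h, Nat.find_spec hex,
    fun _ hi => not_le.mp (Nat.find_min hex hi)⟩

theorem exists_lt_forall_iff_of_subsingleton {P : ℕ → ℕ → Prop} {k m : ℕ}
    (hkm : m + 1 < k) (hP : ∀ i t t', t < m → t' < m → P i t → P i t' → t = t') :
    ∃ i j, i < j ∧ j < k ∧ ∀ t < m, (P j t ↔ P i t) := by
  classical
  let f : ℕ → ℕ := fun i => if h : ∃ t, t < m ∧ P i t then Nat.find h else m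
  have hf : ∀ i, ∀ t < m, (P i t ↔ f i = t) := by
    intro i t ht
    by_cases h : ∃ t, t < m ∧ P i t
    · simp only [f, dif_pos h]
      have hspec := Nat.find_spec h
      exact ⟨fun hPt => hP i _ _ hspec.1 ht hspec.2 hPt, fun hft => hft ▸ hspec.2⟩
    · simp only [f, dif_neg h]
      exact ⟨fun hPt => absurd ⟨t, ht, hPt⟩ h, fun hft => by omega⟩
  obtain ⟨i, hi, j, hj, hne, hij⟩ := Finset.exists_ne_map_eq_of_card_lt_of_maps_to
    (s := Finset.range k) (t := Finset.range (m + 1)) (by simpa using hkm) (f := f) fun i _ => by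
      simp only [Finset.coe_range, Set.mem_Iio, f]
      split_ifs with h
      · exact Nat.lt_succ_of_lt (Nat.find_spec h).1
      · exact Nat.lt_succ_self m
  simp only [Finset.mem_range] at hi hj
  have key : ∀ t < m, (P j t ↔ P i t) := fun t ht => by rw [hf i t ht, hf j t ht, hij]
  rcases lt_or_gt_of_ne hne with h | h
  exacts [⟨i, j, h, hj, key⟩, ⟨j, i, h, hi, fun t ht => (key t ht).symm⟩]

end Arithmetic

section Letters

def lowerBoundHalf (k : ℕ) : List (Fin 2) :=
  (replicate (k - 2) (1 :: replicate (k - 1) 0)).flatten ++ 1 :: replicate (k - 2) 0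

theorem lowerBoundWord_eq (k : ℕ) :
    lowerBoundWord k = lowerBoundHalf k ++ 1 :: (lowerBoundHalf k).reverse := by
  simp [lowerBoundWord, lowerBoundHalf, reverse_flatten, cons_flatten_replicate]

theorem length_lowerBoundHalf {k : ℕ} (hk : 2 ≤ k) :
    (lowerBoundHalf k).length + 1 = k * (k - 1) := by
  obtain ⟨k, rfl⟩ : ∃ k', k = k' + 2 := ⟨k - 2, by omega⟩
  simp [lowerBoundHalf]
  ring

theorem length_lowerBoundWord {k : ℕ} (hk : 2 ≤ k) :
    (lowerBoundWord k).length + 1 = 2 * (k * (k - 1)) := by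
  have := length_lowerBoundHalf hk
  rw [lowerBoundWord_eq]
  simp
  omega

theorem getElem?_lowerBoundHalf {k p : ℕ} (hk : 2 ≤ k) (hp : p + 1 < k * (k - 1)) :
    (lowerBoundHalf k)[p]? = some (if k ∣ p then 1 else 0) := by
  have hlen := length_lowerBoundHalf hk
  have hflat : (replicate (k - 2) (1 :: replicate (k - 1) (0 : Fin 2))).flatten.length
      = (k - 2) * k := by simp; left; omega
  simp only [lowerBoundHalf, length_append, length_cons, length_replicate, hflat] at hlen
  rw [lowerBoundHalf]
  rcases lt_or_ge p ((k - 2) * k) with hpk | hpk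
  · rw [getElem?_append_left (by omega), getElem?_flatten_replicate _ _ (by
      simpa [show k - 1 + 1 = k by omega] using hpk)]
    simp only [length_cons, length_replicate, show k - 1 + 1 = k by omega]
    rw [getElem?_cons_replicate _ _ (by have := Nat.mod_lt p (show 0 < k by omega); omega)]
    simp only [Nat.dvd_iff_mod_eq_zero]
  · obtain ⟨r, rfl⟩ := Nat.exists_eq_add_of_le hpk
    rw [getElem?_append_right (by omega), hflat, Nat.add_sub_cancel_left,
      getElem?_cons_replicate _ _ (by omega)]
    have hr : k ∣ r ↔ r = 0 :=
      ⟨fun h => Nat.eq_zero_of_dvd_of_lt h (by omega), fun h => h ▸ dvd_zero k⟩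
    simp only [Nat.dvd_add_right (dvd_mul_left k _), hr]

/-- `p` carries a `1` in `lowerBoundWord k` (`getElem?_lowerBoundWord`), whose centre is
`k * (k - 1) - 1`. -/
def IsOnePos (k p : ℕ) : Prop :=
  (p + 1 < k * (k - 1) ∧ k ∣ p) ∨ p + 1 = k * (k - 1) ∨ (k * (k - 1) ≤ p ∧ k ∣ p + 2)

instance (k : ℕ) : DecidablePred (IsOnePos k) := fun _ => by unfold IsOnePos; infer_instance

theorem isOnePos_iff_of_lt {k p : ℕ} (hp : p + 1 < k * (k - 1)) : IsOnePos k p ↔ k ∣ p := by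
  unfold IsOnePos; constructor
  · rintro (h | h | h) <;> first | exact h.2 | omega
  · exact fun h => Or.inl ⟨hp, h⟩

theorem isOnePos_of_eq {k p : ℕ} (hp : p + 1 = k * (k - 1)) : IsOnePos k p := Or.inr (Or.inl hp)

theorem isOnePos_iff_of_le {k p : ℕ} (hp : k * (k - 1) ≤ p) : IsOnePos k p ↔ k ∣ p + 2 := by
  unfold IsOnePos; constructor
  · rintro (h | h | h) <;> first | exact h.2 | omega
  · exact fun h => Or.inr (Or.inr ⟨hp, h⟩)

theorem getElem?_lowerBoundWord {k p : ℕ} (hk : 2 ≤ k) (hp : p + 1 < 2 * (k * (k - 1))) :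
    (lowerBoundWord k)[p]? = some (if IsOnePos k p then 1 else 0) := by
  have hlen := length_lowerBoundHalf hk
  rw [lowerBoundWord_eq]
  rcases lt_trichotomy (p + 1) (k * (k - 1)) with hl | hc | hr
  · rw [getElem?_append_left (by omega), getElem?_lowerBoundHalf hk hl]
    simp only [isOnePos_iff_of_lt hl]
  · rw [getElem?_append_right (by omega), show p - (lowerBoundHalf k).length = 0 by omega,
      if_pos (isOnePos_of_eq hc)]
    rfl
  · -- the right half mirrors the left one about the centre, and `k ∣ 2 * (k * (k - 1))`
    obtain ⟨r, rfl⟩ : ∃ r, p = (lowerBoundHalf k).length + 1 + r :=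
      ⟨p - k * (k - 1), by omega⟩
    rw [getElem?_append_right (by omega), show (lowerBoundHalf k).length + 1 + r
      - (lowerBoundHalf k).length = r + 1 by omega, getElem?_cons_succ,
      getElem?_reverse (by omega), getElem?_lowerBoundHalf hk (by omega)]
    have hsum : (lowerBoundHalf k).length - 1 - r + ((lowerBoundHalf k).length + 1 + r + 2)
        = k * (2 * (k - 1)) := by rw [Nat.mul_left_comm]; omega
    have h2A : k ∣ _ := hsum ▸ dvd_mul_right k _
    have hdvd : k ∣ (lowerBoundHalf k).length - 1 - r ↔
        k ∣ (lowerBoundHalf k).length + 1 + r + 2 :=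
      ⟨fun h => (Nat.dvd_add_right h).mp h2A, fun h => (Nat.dvd_add_left h).mp h2A⟩
    have hright : k * (k - 1) ≤ (lowerBoundHalf k).length + 1 + r := by omega
    simp only [isOnePos_iff_of_le hright, hdvd]

theorem getElem?_lowerBoundWord_eq_some_one_iff {k p : ℕ} (hk : 2 ≤ k)
    (hp : p + 1 < 2 * (k * (k - 1))) : (lowerBoundWord k)[p]? = some 1 ↔ IsOnePos k p := by
  rw [getElem?_lowerBoundWord hk hp]
  split_ifs with h <;> simp [h]

theorem getElem?_lowerBoundWord_eq_of_iff {k p q : ℕ} (hk : 2 ≤ k)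
    (hp : p + 1 < 2 * (k * (k - 1))) (hq : q + 1 < 2 * (k * (k - 1)))
    (h : IsOnePos k p ↔ IsOnePos k q) : (lowerBoundWord k)[p]? = (lowerBoundWord k)[q]? := by
  simp only [getElem?_lowerBoundWord hk hp, getElem?_lowerBoundWord hk hq, h]

end Letters

section Powers

theorem exists_isOnePos_mem_Ico {k : ℕ} (hk : 2 ≤ k) (s : ℕ) :
    ∃ p, s ≤ p ∧ p < s + k ∧ IsOnePos k p := by
  obtain ⟨n, hsn, hns, hkn⟩ := exists_dvd_mem_Ico (show 0 < k by omega) s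
  by_cases hleft : n + 1 < k * (k - 1)
  · exact ⟨n, hsn, hns, (isOnePos_iff_of_lt hleft).mpr hkn⟩
  by_cases hcentre : s + 1 ≤ k * (k - 1)
  · exact ⟨k * (k - 1) - 1, by omega, by omega, isOnePos_of_eq (by omega)⟩
  obtain ⟨n, hsn, hns, hkn⟩ := exists_dvd_mem_Ico (show 0 < k by omega) (s + 2)
  refine ⟨n - 2, by omega, by omega, (isOnePos_iff_of_le (by omega)).mpr ?_⟩
  rwa [Nat.sub_add_cancel (by omega)]

theorem IsOnePos.le_centre_of_add {k p g : ℕ} (hp : IsOnePos k p) (hpg : IsOnePos k (p + g))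
    (hg : ¬ k ∣ g) : p + 1 ≤ k * (k - 1) ∧ k * (k - 1) ≤ p + g + 1 := by
  -- on each side of the centre all the `1`s are congruent mod `k`
  rcases hp with ⟨hp, hkp⟩ | hp | ⟨hp, hkp⟩ <;>
    rcases hpg with ⟨hq, hkq⟩ | hq | ⟨hq, hkq⟩
  · exact absurd ((Nat.dvd_add_right hkp).mp hkq) hg
  all_goals first
    | omega
    | exact absurd ((Nat.dvd_add_right hkp).mp (by rwa [Nat.add_right_comm] at hkq)) hg

theorem not_forall_isOnePos_add_mul {k q g : ℕ} (hk : 4 ≤ k) (hg : 0 < g)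
    (hq : q + (k - 1) * g + 2 ≤ 2 * (k * (k - 1))) : ¬ ∀ r < k, IsOnePos k (q + r * g) := by
  intro h
  by_cases hkg : k ∣ g
  · -- the first and last terms are `≡` mod `k` but at least `k * (k - 1)` apart
    have hspan : k * (k - 1) ≤ (k - 1) * g :=
      Nat.mul_comm k (k - 1) ▸ Nat.mul_le_mul_left _ (Nat.le_of_dvd hg hkg)
    have hlast := (isOnePos_iff_of_le (by omega)).mp (h (k - 1) (by omega))
    have hdvd : k ∣ (k - 1) * g := Dvd.dvd.mul_left hkg _
    have hfirst := h 0 (by omega)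
    rw [Nat.zero_mul, Nat.add_zero] at hfirst
    rcases hfirst with ⟨-, hkq⟩ | hq' | ⟨hq', -⟩
    · have h2 : k ∣ 2 := (Nat.dvd_add_right (Nat.dvd_add hkq hdvd)).mp hlast
      have := Nat.le_of_dvd two_pos h2; omega
    · have h1 : k ∣ 1 := by
        rw [show q + (k - 1) * g + 2 = k * (k - 1) + (k - 1) * g + 1 by omega] at hlast
        exact (Nat.dvd_add_right (Nat.dvd_add (dvd_mul_right k _) hdvd)).mp hlast
      have := Nat.le_of_dvd one_pos h1; omega
    · omega
  · -- otherwise each of the first three steps would cross the centre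
    have step (r : ℕ) (hr : r + 1 < k) := IsOnePos.le_centre_of_add (h r (by omega))
      (by rw [Nat.add_assoc, ← Nat.add_one_mul]; exact h (r + 1) hr) hkg
    have h0 := step 0 (by omega)
    have h1 := step 1 (by omega)
    have h2 := step 2 (by omega)
    omega

theorem not_hasKPowerFactor_lowerBoundWord {k : ℕ} (hk : 4 ≤ k) :
    ¬ HasKPowerFactor k (lowerBoundWord k) := by
  rw [hasKPowerFactor_iff (by omega)]
  rintro ⟨s, g, hg, hs, hper⟩
  have hlen := length_lowerBoundWord (k := k) (by omega)
  have hkg : k ≤ k * g := Nat.le_mul_of_pos_right k hg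
  obtain ⟨p, hsp, hpk, hp⟩ := exists_isOnePos_mem_Ico (k := k) (by omega) s
  -- by periodicity, the `1` at `p` recurs `k` times with step `g`
  have hone : ∀ r < k, IsOnePos k (s + (p - s) % g + r * g) := by
    intro r hr
    have hmod := Nat.mod_lt (p - s) hg
    have hlt : (p - s) % g + r * g < k * g := by nlinarith
    rw [← getElem?_lowerBoundWord_eq_some_one_iff (by omega) (by omega), Nat.add_assoc,
      getElem?_add_mod_of_periodic hper hlt, Nat.add_mul_mod_self_right, Nat.mod_mod,
      ← getElem?_add_mod_of_periodic hper (by omega), Nat.add_sub_cancel' hsp,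
      getElem?_lowerBoundWord_eq_some_one_iff (by omega) (by omega)]
    exact hp
  refine not_forall_isOnePos_add_mul hk hg ?_ hone
  have := Nat.mod_lt (p - s) hg
  have : (k - 1) * g + g = k * g := by rw [← Nat.add_one_mul, Nat.sub_add_cancel (by omega)]
  omega

end Powers

section Antipowers

theorem IsOnePos.add_sub_one_le {k p q : ℕ} (hk : 2 ≤ k) (hp : IsOnePos k p) (hq : IsOnePos k q)
    (hpq : p < q) : p + (k - 1) ≤ q := by
  have hA : k ∣ k * (k - 1) := dvd_mul_right k _
  rcases hp with ⟨hp, hkp⟩ | hp | ⟨hp, hkp⟩ <;>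
    rcases hq with ⟨hq, hkq⟩ | hq | ⟨hq, hkq⟩
  · have := add_le_of_dvd_of_lt hkp hkq hpq; omega
  · have := add_le_of_dvd_of_lt hkp hA (by omega); omega
  · have := add_le_of_dvd_of_lt hkp hA (by omega); omega
  all_goals first
    | omega
    | have := add_le_of_dvd_of_lt hA hkq (by omega); omega
    | have := add_le_of_dvd_of_lt hkp hkq (by omega); omega

theorem isOnePos_add_iff_of_lt {k p D : ℕ} (hD : k ∣ D) (h : p + D + 1 < k * (k - 1)) :
    IsOnePos k (p + D) ↔ IsOnePos k p := by
  rw [isOnePos_iff_of_lt h, isOnePos_iff_of_lt (by omega), Nat.dvd_add_left hD]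

theorem isOnePos_add_iff_of_le {k p D : ℕ} (hD : k ∣ D) (h : k * (k - 1) ≤ p) :
    IsOnePos k (p + D) ↔ IsOnePos k p := by
  rw [isOnePos_iff_of_le (by omega), isOnePos_iff_of_le h, Nat.add_right_comm,
    Nat.dvd_add_left hD]

theorem isOnePos_add_iff_of_lt_of_le {k p D : ℕ} (hD : k ∣ D + 2) (hp : p + 1 < k * (k - 1))
    (hpD : k * (k - 1) ≤ p + D) : IsOnePos k (p + D) ↔ IsOnePos k p := by
  rw [isOnePos_iff_of_le hpD, isOnePos_iff_of_lt hp, Nat.add_assoc, Nat.dvd_add_left hD]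

theorem isOnePos_iff_of_near_centre {k p : ℕ} (h₁ : k * (k - 1) + 2 ≤ p + 2 * k)
    (h₂ : p + 4 ≤ k * (k - 1) + 2 * k) :
    IsOnePos k p ↔ p + k = k * (k - 1) ∨ p + 1 = k * (k - 1) ∨ p + 2 = k * (k - 1) + k := by
  have hA : k ∣ k * (k - 1) := dvd_mul_right k _
  constructor
  · rintro (⟨hp, hkp⟩ | hp | ⟨hp, hkp⟩)
    · have := add_le_of_dvd_of_lt hkp hA (by omega)
      rcases this.eq_or_lt with h | h
      · exact Or.inl h
      · have := add_le_of_dvd_of_lt (Nat.dvd_add_self_right.mpr hkp) hA h; omega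
    · exact Or.inr (Or.inl hp)
    · have := add_le_of_dvd_of_lt hA hkp (by omega)
      rcases this.eq_or_lt with h | h
      · exact Or.inr (Or.inr h.symm)
      · have := add_le_of_dvd_of_lt (Nat.dvd_add_self_right.mpr hA) hkp h; omega
  · rintro (h | h | h)
    · exact Or.inl ⟨by omega, Nat.dvd_add_self_right.mp (h ▸ hA)⟩
    · exact isOnePos_of_eq h
    · exact Or.inr (Or.inr ⟨by omega, h ▸ Nat.dvd_add_self_right.mpr hA⟩)

/-- Near the centre `c` the only `1`s are `c - (k - 1)`, `c` and `c + (k - 1)`. -/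
theorem isOnePos_add_sub_one_iff {k p : ℕ} (hk : 2 ≤ k) (h₁ : k * (k - 1) + 2 ≤ p + 2 * k)
    (h₂ : p + 3 ≤ k * (k - 1) + k) : IsOnePos k (p + (k - 1)) ↔ IsOnePos k p := by
  rw [isOnePos_iff_of_near_centre (by omega) (by omega),
    isOnePos_iff_of_near_centre h₁ (by omega)]
  omega

def HasEqualOneBlocks (k s m : ℕ) : Prop :=
  ∃ i j, i < j ∧ j < k ∧
    ∀ t < m, (IsOnePos k (s + j * m + t) ↔ IsOnePos k (s + i * m + t))

theorem HasEqualOneBlocks.of_shift {k s m i d : ℕ} (hd : 0 < d) (hid : i + d < k)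
    (h : ∀ t < m, IsOnePos k (s + i * m + t + d * m) ↔ IsOnePos k (s + i * m + t)) :
    HasEqualOneBlocks k s m :=
  ⟨i, i + d, by omega, hid, fun t ht => by
    rw [show s + (i + d) * m + t = s + i * m + t + d * m by ring]; exact h t ht⟩

theorem hasEqualOneBlocks_of_add_two_le {k s m : ℕ} (hk : 2 ≤ k) (hm : m + 2 ≤ k) :
    HasEqualOneBlocks k s m := by
  -- ones are `k - 1` apart, so a block of length `m < k - 1` contains at most one of them
  refine exists_lt_forall_iff_of_subsingleton (P := fun i t => IsOnePos k (s + i * m + t))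
    (by omega) fun i t t' ht ht' h h' => ?_
  rcases lt_trichotomy t t' with hlt | rfl | hlt
  · have := h.add_sub_one_le hk h' (by omega); omega
  · rfl
  · have := h'.add_sub_one_le hk h (by omega); omega

theorem hasEqualOneBlocks_of_add_one_eq {k s m : ℕ} (hk : 2 ≤ k) (hm : m + 1 = k)
    (hs : s + k * m < 2 * (k * (k - 1))) : HasEqualOneBlocks k s m := by
  obtain rfl : m = k - 1 := by omega
  obtain ⟨n, -, hn, hmin⟩ :=
    exists_least_le_add_mul (A := k * (k - 1)) (s := s) (m := k - 1) (n₀ := k) (by omega)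
  have hn0 : n ≠ 0 := by rintro rfl; omega
  have hprev := hmin (n - 1) (by omega)
  have hstep : (n - 1) * (k - 1) + (k - 1) = n * (k - 1) := by
    rw [← Nat.add_one_mul, Nat.sub_add_cancel (Nat.pos_of_ne_zero hn0)]
  have hA : (k - 2) * (k - 1) + 2 * (k - 1) = k * (k - 1) := by
    rw [← Nat.add_mul, Nat.sub_add_cancel hk]
  rcases le_total (n - 1) (k - 2) with hi | hi
  · refine HasEqualOneBlocks.of_shift (i := n - 1) (d := 1) one_pos (by omega) fun t ht => ?_
    rw [Nat.one_mul]
    exact isOnePos_add_sub_one_iff hk (by omega) (by omega)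
  · have hle : s + (k - 2) * (k - 1) ≤ s + (n - 1) * (k - 1) :=
      Nat.add_le_add_left (Nat.mul_le_mul_right _ hi) s
    refine HasEqualOneBlocks.of_shift (i := k - 2) (d := 1) one_pos (by omega) fun t ht => ?_
    rw [Nat.one_mul]
    exact isOnePos_add_sub_one_iff hk (by omega) (by omega)

theorem hasEqualOneBlocks_of_three_le_gcd {k s m : ℕ} (hk : 4 ≤ k) (hg : 3 ≤ Nat.gcd m k) :
    HasEqualOneBlocks k s m := by
  obtain ⟨a, ha⟩ := Nat.gcd_dvd_left m k
  obtain ⟨d, hd⟩ := Nat.gcd_dvd_right m k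
  generalize Nat.gcd m k = g at *
  subst ha hd
  -- `d = k / gcd m k` blocks span a multiple of `k`
  have hkd : g * d ∣ d * (g * a) := ⟨a, by ring⟩
  have h3d : 3 * d ≤ g * d := Nat.mul_le_mul_right d hg
  have hd0 : 0 < d := Nat.pos_of_ne_zero fun h => by rw [h, Nat.mul_zero] at hk; omega
  by_cases hleft : s + (d + 1) * (g * a) < g * d * (g * d - 1)
  · refine HasEqualOneBlocks.of_shift (i := 0) hd0 (by omega) fun t ht => ?_
    refine isOnePos_add_iff_of_lt hkd ?_
    rw [Nat.add_mul, Nat.one_mul] at hleft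
    omega
  · obtain ⟨n, hn, hAn, -⟩ := exists_least_le_add_mul (A := g * d * (g * d - 1)) (s := s)
      (m := g * a) (n₀ := d + 1) (by omega)
    refine HasEqualOneBlocks.of_shift (i := n) hd0 (by omega) fun t ht => ?_
    exact isOnePos_add_iff_of_le hkd (by omega)

theorem hasEqualOneBlocks_of_gcd_le_two {k s m : ℕ} (hk : 3 ≤ k) (hkm : k ≤ m)
    (hg : Nat.gcd m k ≤ 2) (hs : s + k * m < 2 * (k * (k - 1))) : HasEqualOneBlocks k s m := by
  have hgcd : Nat.gcd m k ∣ 2 := by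
    have := Nat.gcd_pos_of_pos_right m (show 0 < k by omega)
    interval_cases h : Nat.gcd m k <;> simp
  obtain ⟨d, hdk, hkd⟩ := exists_dvd_mul_add_two (by omega) hgcd
  have hm2 : m + 2 < 2 * k := by
    have : k * m < k * (2 * (k - 1)) := by rw [Nat.mul_left_comm]; omega
    have := Nat.lt_of_mul_lt_mul_left this
    omega
  have hd2 : 2 ≤ d := by
    rcases Nat.lt_or_ge d 2 with h | h
    · interval_cases d
      · have := Nat.le_of_dvd two_pos (by simpa using hkd); omega
      · have := add_le_of_dvd_of_lt (dvd_refl k) (by simpa using hkd) (by omega); omega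
    · exact h
  have hlast : k * (k - 1) ≤ (k - 1) * m :=
    Nat.mul_comm k (k - 1) ▸ Nat.mul_le_mul_left _ hkm
  have hkm' : (k - 1) * m + m = k * m := by
    rw [← Nat.add_one_mul, Nat.sub_add_cancel (by omega)]
  obtain ⟨n, hn, hAn, hmin⟩ := exists_least_le_add_mul (A := k * (k - 1)) (s := s) (m := m)
    (n₀ := k - 1) (by omega)
  have hn2 : 2 ≤ n := by
    by_contra h
    interval_cases n <;> simp at hAn <;> omega
  -- a block entirely left of the centre whose `d`-th successor lies entirely right of it
  obtain ⟨i, hin, hik, hni⟩ : ∃ i, i + 2 ≤ n ∧ i + d < k ∧ n ≤ i + d := by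
    rcases le_total (n - 2) (k - 1 - d) with h | h
    · exact ⟨n - 2, by omega, by omega, by omega⟩
    · exact ⟨k - 1 - d, by omega, by omega, by omega⟩
  have hleft := hmin (i + 1) (by omega)
  have hright : n * m ≤ (i + d) * m := Nat.mul_le_mul_right _ hni
  refine HasEqualOneBlocks.of_shift (i := i) (by omega) hik fun t ht => ?_
  refine isOnePos_add_iff_of_lt_of_le hkd ?_ ?_
  · rw [Nat.add_mul, Nat.one_mul] at hleft
    omega
  · rw [Nat.add_mul] at hright; omega

theorem not_hasKAntipowerFactor_lowerBoundWord {k : ℕ} (hk : 4 ≤ k) :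
    ¬ HasKAntipowerFactor k (lowerBoundWord k) := by
  rw [hasKAntipowerFactor_iff]
  rintro ⟨s, m, hm, hs, hdist⟩
  have hlen := length_lowerBoundWord (k := k) (by omega)
  have hs' : s + k * m < 2 * (k * (k - 1)) := by omega
  have hblocks : HasEqualOneBlocks k s m := by
    rcases lt_trichotomy (m + 1) k with h | h | h
    · exact hasEqualOneBlocks_of_add_two_le (by omega) h
    · exact hasEqualOneBlocks_of_add_one_eq (by omega) h hs'
    · rcases le_or_gt 3 (Nat.gcd m k) with hg | hg
      · exact hasEqualOneBlocks_of_three_le_gcd hk hg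
      · exact hasEqualOneBlocks_of_gcd_le_two (by omega) (by omega) (by omega) hs'
  obtain ⟨i, j, hij, hjk, h⟩ := hblocks
  have hbound {i t : ℕ} (hi : i < k) (ht : t < m) : s + i * m + t + 1 < 2 * (k * (k - 1)) := by
    nlinarith
  exact hij.ne (hdist i (by omega) j hjk fun t ht => getElem?_lowerBoundWord_eq_of_iff
    (by omega) (hbound (by omega) ht) (hbound hjk ht) (h t ht).symm)

end Antipowers

/-- For `k ≥ 4`, the binary word
`x = 1 (0^(k-1) 1)^(k-2) 0^(k-2) 1 0^(k-2) (1 0^(k-1))^(k-2) 1` has length `2k² - 2k - 1`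
and contains no `k`-power factor and no `k`-anti-power factor; consequently
`N_α(k,k) ≥ 2k² - 2k` for every alphabet size `α ≥ 2`. -/
theorem statement16 (k : ℕ) (hk : 4 ≤ k) :
    (lowerBoundWord k).length = 2 * k ^ 2 - 2 * k - 1 ∧
    ¬ HasKPowerFactor k (lowerBoundWord k) ∧
    ¬ HasKAntipowerFactor k (lowerBoundWord k) ∧
    ∀ α : ℕ, 2 ≤ α → 2 * k ^ 2 - 2 * k ≤ Nalpha α k := by
  have hlen := length_lowerBoundWord (k := k) (by omega)
  have hsq : k * (k - 1) + k = k ^ 2 := by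
    rw [← Nat.mul_add_one, Nat.sub_add_cancel (by omega), sq]
  have hpow := not_hasKPowerFactor_lowerBoundWord hk
  have hanti := not_hasKAntipowerFactor_lowerBoundWord hk
  refine ⟨by omega, hpow, hanti, fun α hα => ?_⟩
  have := length_lt_nalpha (α := α) (by omega) (x := (lowerBoundWord k).map (Fin.castLE hα))
    (fun h => hpow (h.of_map (by omega) (Fin.castLE_injective hα))) (fun h => hanti h.of_map)
  rw [length_map] at this
  omega
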